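/- The class Av(213, 312) is uniquely-Wilf: for any two permutations π, σ in Av(213, 312) of the same size and any n, the number of size-n permutations in Av(213, 312) containing π equals the number containing σ. -/

import Mathlib

abbrev PermS : Type := Σ n : ℕ, Equiv.Perm (Fin n)

def Contains (π σ : PermS) : Prop :=
  ∃ f : Fin π.1 ↪o Fin σ.1, ∀ i j : Fin π.1, π.2 i < π.2 j ↔ σ.2 (f i) < σ.2 (f j)

def IsPermClass (C : Set PermS) : Prop :=
  ∀ π σ : PermS, σ ∈ C → Contains π σ → π ∈ C

noncomputable def avCount (C : Set PermS) (π : PermS) (n : ℕ) : ℕ :=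
  {σ : PermS | σ ∈ C ∧ σ.1 = n ∧ ¬ Contains π σ}.ncard

noncomputable def invCount (C : Set PermS) (π : PermS) (n : ℕ) : ℕ :=
  {σ : PermS | σ ∈ C ∧ σ.1 = n ∧ Contains π σ}.ncard

def WilfEquivRel (C : Set PermS) (π σ : PermS) : Prop :=
  ∀ n : ℕ, avCount C π n = avCount C σ n

def UniquelyWilf (C : Set PermS) : Prop :=
  ∀ π σ : PermS, π ∈ C → σ ∈ C → π.1 = σ.1 → WilfEquivRel C π σ

def KNBalanced (C : Set PermS) (k n : ℕ) : Prop :=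
  ∀ π σ : PermS, π ∈ C → σ ∈ C → π.1 = k → σ.1 = k → invCount C π n = invCount C σ n

def Av (X : Set PermS) : Set PermS := {σ | ∀ π ∈ X, ¬ Contains π σ}

def idPerm (k : ℕ) : PermS := ⟨k, 1⟩
def revPermS (k : ℕ) : PermS := ⟨k, Fin.revPerm⟩

def p132 : PermS := ⟨3, Equiv.mk ![0,2,1] ![0,2,1] (by decide) (by decide)⟩
def p213 : PermS := ⟨3, Equiv.mk ![1,0,2] ![1,0,2] (by decide) (by decide)⟩
def p231 : PermS := ⟨3, Equiv.mk ![1,2,0] ![2,0,1] (by decide) (by decide)⟩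
def p312 : PermS := ⟨3, Equiv.mk ![2,0,1] ![1,2,0] (by decide) (by decide)⟩

/-- The class Av(213, 312). -/
def Av2 : Set PermS := Av {p213, p312}

/-!
A permutation avoids 213 and 312 exactly when it has no valley, i.e. when every value lies either
to the left or to the right of all larger values. Recording that side for each value except the
maximum is a bijection from the class at size `M + 1` onto words of length `M` over `Bool`.
Containment is unchanged by inverting both permutations, and on inverses (positions of values) it
becomes the subsequence order on these words. So the number of size-`M + 1` members containing a
pattern is the number of words of length `M` containing the pattern's word. Splitting the words
over an alphabet `α` by their first letter gives
`N (m + 1) (a :: u) = N m u + (|α| - 1) * N m (a :: u)`,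
so by induction this number depends only on the length of the pattern.
-/

open Finset
open scoped List

theorem lt_iff_lt_of_forall_lt_of_injective {α β γ : Type*} [LinearOrder α] [LinearOrder β]
    [LinearOrder γ] {f : α → β} {g : α → γ} (hf : Function.Injective f)
    (hg : Function.Injective g) (h : ∀ a b, a < b → (f a < f b ↔ g a < g b)) (a b : α) :
    f a < f b ↔ g a < g b := by
  rcases lt_trichotomy a b with hab | rfl | hab
  · exact h a b hab
  · simp
  · rw [← (hf.ne hab.ne').le_iff_lt, ← not_lt, h b a hab, not_lt, (hg.ne hab.ne').le_iff_lt]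

theorem Tuple.sort_symm_lt_sort_symm_iff {n : ℕ} {α : Type*} [LinearOrder α] {f : Fin n → α}
    (hf : Function.Injective f) (a b : Fin n) :
    (Tuple.sort f).symm a < (Tuple.sort f).symm b ↔ f a < f b := by
  have hmono : StrictMono (f ∘ Tuple.sort f) :=
    (Tuple.monotone_sort f).strictMono_of_injective (hf.comp (Tuple.sort f).injective)
  simpa using hmono.lt_iff_lt (a := (Tuple.sort f).symm a) (b := (Tuple.sort f).symm b) |>.symm

theorem List.cons_sublist_cons_iff_of_ne {α : Type*} {a b : α} {u l : List α} (hab : a ≠ b) :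
    a :: u <+ b :: l ↔ a :: u <+ l := by
  simp [List.sublist_cons_iff, hab]

theorem List.ofFn_sublist_ofFn_iff {α : Type*} {k m : ℕ} {u : Fin k → α} {w : Fin m → α} :
    List.ofFn u <+ List.ofFn w ↔ ∃ g : Fin k ↪o Fin m, ∀ i, u i = w (g i) := by
  rw [List.sublist_iff_exists_fin_orderEmbedding_get_eq]
  constructor
  · rintro ⟨g, hg⟩
    refine ⟨((Fin.castOrderIso List.length_ofFn.symm).toOrderEmbedding.trans g).trans
      (Fin.castOrderIso List.length_ofFn).toOrderEmbedding, fun i => ?_⟩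
    simpa [Fin.cast] using hg (Fin.cast List.length_ofFn.symm i)
  · rintro ⟨g, hg⟩
    refine ⟨((Fin.castOrderIso List.length_ofFn).toOrderEmbedding.trans g).trans
      (Fin.castOrderIso List.length_ofFn.symm).toOrderEmbedding, fun i => ?_⟩
    simpa [Fin.cast] using hg (Fin.cast List.length_ofFn i)

section Supersequences

variable {α : Type*} [Fintype α] [DecidableEq α]

def supersequenceCount (m : ℕ) (u : List α) : ℕ := #{w : Fin m → α | u <+ List.ofFn w}

theorem supersequenceCount_zero_cons (a : α) (u : List α) :
    supersequenceCount 0 (a :: u) = 0 := by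
  simp [supersequenceCount]

theorem supersequenceCount_succ_cons (m : ℕ) (a : α) (u : List α) :
    supersequenceCount (m + 1) (a :: u) =
      supersequenceCount m u + (Fintype.card α - 1) * supersequenceCount m (a :: u) := by
  have split : supersequenceCount (m + 1) (a :: u) =
      ∑ b : α, #{w : Fin m → α | a :: u <+ b :: List.ofFn w} := by
    rw [supersequenceCount, card_filter, ← (Fin.consEquiv fun _ => α).sum_comp,
      Fintype.sum_prod_type]
    simp only [Fin.consEquiv, Equiv.coe_fn_mk, List.ofFn_cons, card_filter]
  have other_heads : ∀ b ∈ univ.erase a,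
      #{w : Fin m → α | a :: u <+ b :: List.ofFn w} = supersequenceCount m (a :: u) := by
    intro b hb
    simp only [List.cons_sublist_cons_iff_of_ne (ne_of_mem_erase hb).symm, supersequenceCount]
  rw [split, ← add_sum_erase _ _ (mem_univ a), sum_congr rfl other_heads, sum_const,
    card_erase_of_mem (mem_univ a), card_univ, smul_eq_mul]
  simp only [List.cons_sublist_cons, supersequenceCount]

theorem supersequenceCount_eq_of_length_eq (m : ℕ) {u u' : List α} (h : u.length = u'.length) :
    supersequenceCount m u = supersequenceCount m u' := by
  induction m generalizing u u' with
  | zero =>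
    cases u <;> cases u' <;> simp_all [supersequenceCount_zero_cons]
  | succ m ih =>
    cases u with
    | nil => cases u' <;> simp_all
    | cons a u =>
      cases u' with
      | nil => simp at h
      | cons a' u' =>
        rw [supersequenceCount_succ_cons, supersequenceCount_succ_cons, ih h,
          ih (Nat.succ.inj h)]

end Supersequences

theorem Contains.perm_symm {k n : ℕ} {p : Equiv.Perm (Fin k)} {q : Equiv.Perm (Fin n)}
    (h : Contains ⟨k, p⟩ ⟨n, q⟩) : Contains ⟨k, p.symm⟩ ⟨n, q.symm⟩ := by
  obtain ⟨f, hf⟩ := h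
  have hmono : StrictMono fun y => q (f (p.symm y)) := fun y y' hy =>
    (hf _ _).1 (by simpa using hy)
  refine ⟨OrderEmbedding.ofStrictMono _ hmono, fun y y' => ?_⟩
  simp [f.lt_iff_lt]

theorem contains_perm_symm_iff {k n : ℕ} {p : Equiv.Perm (Fin k)} {q : Equiv.Perm (Fin n)} :
    Contains ⟨k, p⟩ ⟨n, q⟩ ↔ Contains ⟨k, p.symm⟩ ⟨n, q.symm⟩ :=
  ⟨Contains.perm_symm, fun h => by simpa using h.perm_symm⟩

theorem Contains.size_le {π σ : PermS} (h : Contains π σ) : π.1 ≤ σ.1 := by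
  obtain ⟨f, -⟩ := h
  simpa using Fintype.card_le_of_embedding f.toEmbedding

theorem invCount_eq_zero_of_lt (C : Set PermS) {π : PermS} {n : ℕ} (hn : n < π.1) :
    invCount C π n = 0 := by
  have hempty : {σ : PermS | σ ∈ C ∧ σ.1 = n ∧ Contains π σ} = ∅ :=
    Set.eq_empty_of_forall_notMem fun σ ⟨_, hσ, h⟩ => hn.not_ge (hσ ▸ h.size_le)
  rw [invCount, hempty, Set.ncard_empty]

theorem Fin.exists_orderEmbedding_three {n : ℕ} {i j k : Fin n} (hij : i < j) (hjk : j < k) :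
    ∃ f : Fin 3 ↪o Fin n, f 0 = i ∧ f 1 = j ∧ f 2 = k := by
  have hmono : StrictMono ![i, j, k] := by
    simp [Fin.strictMono_iff_lt_succ, Fin.forall_fin_two, hij, hjk]
  exact ⟨OrderEmbedding.ofStrictMono _ hmono, rfl, rfl, rfl⟩

theorem contains_p213_iff {n : ℕ} (q : Equiv.Perm (Fin n)) :
    Contains p213 ⟨n, q⟩ ↔
      ∃ f : Fin 3 ↪o Fin n, q (f 1) < q (f 0) ∧ q (f 0) < q (f 2) := by
  change (∃ f : Fin 3 ↪o Fin n, ∀ a b : Fin 3,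
    (![1, 0, 2] : Fin 3 → Fin 3) a < ![1, 0, 2] b ↔ q (f a) < q (f b)) ↔ _
  simp [Fin.forall_fin_succ]
  exact exists_congr fun _ => ⟨by grind, by grind⟩

theorem contains_p312_iff {n : ℕ} (q : Equiv.Perm (Fin n)) :
    Contains p312 ⟨n, q⟩ ↔
      ∃ f : Fin 3 ↪o Fin n, q (f 1) < q (f 2) ∧ q (f 2) < q (f 0) := by
  change (∃ f : Fin 3 ↪o Fin n, ∀ a b : Fin 3,
    (![2, 0, 1] : Fin 3 → Fin 3) a < ![2, 0, 1] b ↔ q (f a) < q (f b)) ↔ _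
  simp [Fin.forall_fin_succ]
  exact exists_congr fun _ => ⟨by grind, by grind⟩

def IsValleyFree {n : ℕ} (q : Equiv.Perm (Fin n)) : Prop :=
  ∀ i j k : Fin n, i < j → j < k → ¬(q j < q i ∧ q j < q k)

theorem mem_Av2_iff_isValleyFree {n : ℕ} (q : Equiv.Perm (Fin n)) :
    ⟨n, q⟩ ∈ Av2 ↔ IsValleyFree q := by
  simp only [Av2, Av, Set.mem_ofPred_eq, Set.mem_insert_iff, Set.mem_singleton_iff,
    forall_eq_or_imp, forall_eq, contains_p213_iff, contains_p312_iff, not_exists]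
  constructor
  · rintro ⟨h213, h312⟩ i j k hij hjk ⟨hji, hjk'⟩
    obtain ⟨f, rfl, rfl, rfl⟩ := Fin.exists_orderEmbedding_three hij hjk
    rcases lt_or_gt_of_ne (q.injective.ne (f.injective.ne (by decide : (0 : Fin 3) ≠ 2)))
      with h | h
    · exact h213 f ⟨hji, h⟩
    · exact h312 f ⟨hjk', h⟩
  · intro h
    have valley (f : Fin 3 ↪o Fin n) : ¬(q (f 1) < q (f 0) ∧ q (f 1) < q (f 2)) :=
      h _ _ _ (f.lt_iff_lt.2 (by decide)) (f.lt_iff_lt.2 (by decide))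
    exact ⟨fun f ⟨h1, h2⟩ => valley f ⟨h1, h1.trans h2⟩,
      fun f ⟨h1, h2⟩ => valley f ⟨h1.trans h2, h1⟩⟩

theorem IsValleyFree.symm_lt_symm_iff {n : ℕ} {q : Equiv.Perm (Fin n)} (hq : IsValleyFree q)
    {x y z : Fin n} (hy : x < y) (hz : x < z) : q.symm x < q.symm y ↔ q.symm x < q.symm z := by
  have hy' : q.symm y ≠ q.symm x := q.symm.injective.ne hy.ne'
  have hz' : q.symm z ≠ q.symm x := q.symm.injective.ne hz.ne'
  constructor
  · intro hxy
    by_contra hxz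
    exact hq _ _ _ (lt_of_le_of_ne (not_lt.1 hxz) hz') hxy (by simpa using ⟨hz, hy⟩)
  · intro hxz
    by_contra hxy
    exact hq _ _ _ (lt_of_le_of_ne (not_lt.1 hxy) hy') hxz (by simpa using ⟨hy, hz⟩)

section Words

variable {K M : ℕ}

/-- Letter `w v` tells whether the value `v.castSucc` lies left (`true`) or right (`false`) of
every larger value of `q`, positions being read off `q.symm`; the maximum `M` gets no letter. -/
def HasWord (q : Equiv.Perm (Fin (M + 1))) (w : Fin M → Bool) : Prop :=
  ∀ (v : Fin M) (v' : Fin (M + 1)), v.castSucc < v' → (q.symm v.castSucc < q.symm v' ↔ w v)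

theorem HasWord.word_eq {q : Equiv.Perm (Fin (M + 1))} {w w' : Fin M → Bool}
    (hw : HasWord q w) (hw' : HasWord q w') : w = w' :=
  funext fun v => Bool.eq_iff_iff.2 <|
    (hw v v.succ Fin.castSucc_lt_succ).symm.trans (hw' v v.succ Fin.castSucc_lt_succ)

theorem HasWord.symm_lt_symm_iff {q q' : Equiv.Perm (Fin (M + 1))} {w : Fin M → Bool}
    (hq : HasWord q w) (hq' : HasWord q' w) (a b : Fin (M + 1)) :
    q.symm a < q.symm b ↔ q'.symm a < q'.symm b := by
  refine lt_iff_lt_of_forall_lt_of_injective q.symm.injective q'.symm.injective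
    (fun a b hab => ?_) a b
  obtain ⟨v, rfl⟩ := Fin.exists_castSucc_eq.2 (Fin.ne_last_of_lt hab)
  exact (hq v b hab).trans (hq' v b hab).symm

theorem HasWord.perm_eq {q q' : Equiv.Perm (Fin (M + 1))} {w : Fin M → Bool}
    (hq : HasWord q w) (hq' : HasWord q' w) : q = q' := by
  have hmono : StrictMono (q'.symm ∘ q) := fun i j hij => by
    simpa [← hq.symm_lt_symm_iff hq'] using hij
  exact Equiv.ext fun i => by simpa using congrArg q' (hmono.apply_eq (x := i))

theorem exists_hasWord_iff_isValleyFree (q : Equiv.Perm (Fin (M + 1))) :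
    (∃ w, HasWord q w) ↔ IsValleyFree q := by
  constructor
  · rintro ⟨w, hw⟩ i j k hij hjk ⟨hji, hjk'⟩
    obtain ⟨v, hv⟩ := Fin.exists_castSucc_eq.2 (Fin.ne_last_of_lt hji)
    have hi := hw v (q i) (hv ▸ hji)
    have hk := hw v (q k) (hv ▸ hjk')
    rw [hv] at hi hk
    simp only [Equiv.symm_apply_apply] at hi hk
    exact hij.not_gt (hi.2 (hk.1 hjk))
  · intro hq
    refine ⟨fun v => decide (q.symm v.castSucc < q.symm v.succ), fun v v' hv' => ?_⟩
    rw [decide_eq_true_iff]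
    exact hq.symm_lt_symm_iff hv' Fin.castSucc_lt_succ

theorem HasWord.contains_iff_sublist {p : Equiv.Perm (Fin (K + 1))} {q : Equiv.Perm (Fin (M + 1))}
    {u : Fin K → Bool} {w : Fin M → Bool} (hp : HasWord p u) (hq : HasWord q w) :
    Contains ⟨K + 1, p⟩ ⟨M + 1, q⟩ ↔ List.ofFn u <+ List.ofFn w := by
  rw [contains_perm_symm_iff, List.ofFn_sublist_ofFn_iff]
  constructor
  · rintro ⟨h, hh⟩
    have hne (v : Fin K) : h v.castSucc ≠ Fin.last M :=
      Fin.ne_last_of_lt (h.lt_iff_lt.2 (Fin.castSucc_lt_succ (i := v)))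
    have hmono : StrictMono fun v => (h v.castSucc).castPred (hne v) := fun a b hab => by
      simpa [Fin.castPred_lt_castPred_iff] using hab
    refine ⟨OrderEmbedding.ofStrictMono _ hmono, fun v => Bool.eq_iff_iff.2 ?_⟩
    have hlt : ((h v.castSucc).castPred (hne v)).castSucc < h v.succ := by simp
    exact (hp v v.succ Fin.castSucc_lt_succ).symm.trans
      ((hh _ _).trans (by simpa using hq _ _ hlt))
  · rintro ⟨g, hg⟩
    let h : Fin (K + 1) → Fin (M + 1) := Fin.lastCases (Fin.last M) fun v => (g v).castSucc
    have hmono : StrictMono h := by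
      intro a b hab
      obtain ⟨a, rfl⟩ := Fin.exists_castSucc_eq.2 (Fin.ne_last_of_lt hab)
      induction b using Fin.lastCases with
      | last => simp [h]
      | cast b => simpa [h] using g.lt_iff_lt.2 (by simpa using hab)
    refine ⟨OrderEmbedding.ofStrictMono h hmono, lt_iff_lt_of_forall_lt_of_injective
      p.symm.injective (q.symm.injective.comp hmono.injective) fun a b hab => ?_⟩
    obtain ⟨v, rfl⟩ := Fin.exists_castSucc_eq.2 (Fin.ne_last_of_lt hab)
    have hv : h v.castSucc = (g v).castSucc := Fin.lastCases_castSucc _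
    have := hq (g v) (h b) (hv ▸ hmono hab)
    rw [hp v b hab, hg v, OrderEmbedding.coe_ofStrictMono, hv, this]

theorem mem_Av2_iff_exists_hasWord (q : Equiv.Perm (Fin (M + 1))) :
    ⟨M + 1, q⟩ ∈ Av2 ↔ ∃ w, HasWord q w :=
  (mem_Av2_iff_isValleyFree q).trans (exists_hasWord_iff_isValleyFree q).symm

/-- Sorting by this key lists the values with letter `true` increasingly, then `M`, then the
values with letter `false` decreasingly. -/
def wordKey (w : Fin M → Bool) : Fin (M + 1) → ℕ :=
  Fin.lastCases M fun v => if w v then v else 2 * M + 1 - v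

theorem wordKey_injective (w : Fin M → Bool) : Function.Injective (wordKey w) := by
  intro a b h
  induction a using Fin.lastCases <;> induction b using Fin.lastCases <;>
    simp only [wordKey, Fin.lastCases_last, Fin.lastCases_castSucc] at h <;>
    (try split_ifs at h) <;> simp [Fin.ext_iff] <;> omega

theorem wordKey_castSucc_lt_iff (w : Fin M → Bool) {v : Fin M} {v' : Fin (M + 1)}
    (h : v.castSucc < v') : wordKey w v.castSucc < wordKey w v' ↔ w v := by
  have := v.isLt
  induction v' using Fin.lastCases <;>
    simp only [wordKey, Fin.lastCases_last, Fin.lastCases_castSucc] <;>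
    simp only [Fin.lt_def, Fin.val_castSucc] at h <;> split_ifs <;> simp_all <;> omega

def permOfWord (w : Fin M → Bool) : Equiv.Perm (Fin (M + 1)) := Tuple.sort (wordKey w)

theorem hasWord_permOfWord (w : Fin M → Bool) : HasWord (permOfWord w) w := fun _ _ h =>
  (Tuple.sort_symm_lt_sort_symm_iff (wordKey_injective w) _ _).trans (wordKey_castSucc_lt_iff w h)

theorem permOfWord_injective : Function.Injective (permOfWord (M := M)) := fun w w' h =>
  (hasWord_permOfWord w).word_eq (h ▸ hasWord_permOfWord w')

end Words

theorem invCount_Av2_eq_supersequenceCount {K : ℕ} {p : Equiv.Perm (Fin (K + 1))}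
    {u : Fin K → Bool} (hp : HasWord p u) (M : ℕ) :
    invCount Av2 ⟨K + 1, p⟩ (M + 1) = supersequenceCount M (List.ofFn u) := by
  have hset : {σ : PermS | σ ∈ Av2 ∧ σ.1 = M + 1 ∧ Contains ⟨K + 1, p⟩ σ} =
      (fun w => (⟨M + 1, permOfWord w⟩ : PermS)) '' {w | List.ofFn u <+ List.ofFn w} := by
    ext ⟨n, q⟩
    simp only [Set.mem_ofPred_eq, Set.mem_image]
    constructor
    · rintro ⟨hmem, rfl, hcont⟩
      obtain ⟨w, hw⟩ := (mem_Av2_iff_exists_hasWord q).1 hmem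
      exact ⟨w, (hp.contains_iff_sublist hw).1 hcont, by rw [(hasWord_permOfWord w).perm_eq hw]⟩
    · rintro ⟨w, hsub, hσ⟩
      cases hσ
      exact ⟨(mem_Av2_iff_exists_hasWord _).2 ⟨w, hasWord_permOfWord w⟩, rfl,
        (hp.contains_iff_sublist (hasWord_permOfWord w)).2 hsub⟩
  have hinj : Function.Injective fun w : Fin M → Bool => (⟨M + 1, permOfWord w⟩ : PermS) :=
    sigma_mk_injective.comp permOfWord_injective
  rw [invCount, hset, Set.ncard_image_of_injective _ hinj, supersequenceCount,
    ← Set.ncard_coe_finset, coe_filter]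
  simp

theorem stmt18 (π σ : PermS) (hπ : π ∈ Av2) (hσ : σ ∈ Av2) (hsize : π.1 = σ.1) :
    ∀ n : ℕ, invCount Av2 π n = invCount Av2 σ n := by
  obtain ⟨k, p⟩ := π
  obtain ⟨k', q⟩ := σ
  obtain rfl : k = k' := hsize
  intro n
  cases k with
  | zero => rw [Subsingleton.elim p q]
  | succ K =>
    obtain ⟨u, hu⟩ := (mem_Av2_iff_exists_hasWord p).1 hπ
    obtain ⟨u', hu'⟩ := (mem_Av2_iff_exists_hasWord q).1 hσ
    cases n with
    | zero =>
      rw [invCount_eq_zero_of_lt _ K.succ_pos, invCount_eq_zero_of_lt _ K.succ_pos]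
    | succ M =>
      rw [invCount_Av2_eq_supersequenceCount hu, invCount_Av2_eq_supersequenceCount hu']
      exact supersequenceCount_eq_of_length_eq M (by simp)
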